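/- arXiv:2310.01346 — 6 statements merged into one kernel-verified Lean document; each statement's English description precedes it below -/
import Mathlib

section
/- For a symmetric open convex cone Γ ⊂ ℝⁿ with vertex at 0 satisfying Γₙ⁺ ⊆ Γ ⊆ Γ₁⁺ (where Γₙ⁺ is the positive orthant and Γ₁⁺ = {λ : λ₁+⋯+λₙ > 0}), the number μ_Γ⁺ defined by the condition (-μ_Γ⁺, 1, …, 1) ∈ ∂Γ exists, is unique, and satisfies 0 ≤ μ_Γ⁺ ≤ n−1. -/
/-!
The parameters `t` for which the point `(-t, 1, …, 1)` of the line lies in `Γ` form an open set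
containing `(-∞, 0)` (the positive orthant) and bounded above by `n - 1` (the coordinate sum is
positive on `Γ`). As `Γ` is open and convex, the half-open segment from a point of `Γ` to a point
of its closure lies in `Γ`, so this set is an interval `(-∞, μ₀)`, and the line meets `∂Γ` exactly
at `μ₀`.
-/

section Line

variable {E : Type*} [AddCommGroup E] [Module ℝ E] [TopologicalSpace E] [IsTopologicalAddGroup E]
  [ContinuousSMul ℝ E] {Γ : Set E}

theorem Convex.add_smul_mem_of_mem_of_mem_closure (hconv : Convex ℝ Γ) (hopen : IsOpen Γ)
    {p v : E} {s r u : ℝ} (hs : p + s • v ∈ Γ) (hu : p + u • v ∈ closure Γ) (hsr : s ≤ r)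
    (hru : r < u) : p + r • v ∈ Γ := by
  have hsu : 0 < u - s := by linarith
  have hmem := hconv.combo_interior_closure_mem_interior (hopen.interior_eq.symm ▸ hs) hu
    (div_pos (sub_pos.mpr hru) hsu) (div_nonneg (sub_nonneg.mpr hsr) hsu.le)
    (by field_simp; ring)
  rw [hopen.interior_eq] at hmem
  convert hmem using 1
  match_scalars <;> field_simp <;> ring

theorem Convex.setOf_add_smul_mem_eq_Iio (hconv : Convex ℝ Γ) (hopen : IsOpen Γ) {p v : E}
    (hbelow : ¬BddBelow {t : ℝ | p + t • v ∈ Γ}) (habove : BddAbove {t : ℝ | p + t • v ∈ Γ}) :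
    {t : ℝ | p + t • v ∈ Γ} = Set.Iio (sSup {t : ℝ | p + t • v ∈ Γ}) := by
  set S := {t : ℝ | p + t • v ∈ Γ}
  have hSopen : IsOpen S := hopen.preimage (by fun_prop)
  refine Set.Subset.antisymm ?_ fun t ht => ?_
  · rw [← interior_Iic (a := sSup S), hSopen.subset_interior_iff]
    exact fun t ht => le_csSup habove ht
  · obtain ⟨u, huS, htu⟩ := exists_lt_of_lt_csSup (nonempty_of_not_bddBelow hbelow) ht
    obtain ⟨s, hsS, hst⟩ := not_bddBelow_iff.mp hbelow t
    exact hconv.add_smul_mem_of_mem_of_mem_closure hopen hsS (subset_closure huS) hst.le htu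

theorem Convex.add_smul_mem_frontier_iff (hconv : Convex ℝ Γ) (hopen : IsOpen Γ) {p v : E}
    (hbelow : ¬BddBelow {t : ℝ | p + t • v ∈ Γ}) (habove : BddAbove {t : ℝ | p + t • v ∈ Γ})
    {t : ℝ} : p + t • v ∈ frontier Γ ↔ t = sSup {t : ℝ | p + t • v ∈ Γ} := by
  set S := {t : ℝ | p + t • v ∈ Γ}
  have hS : S = Set.Iio (sSup S) := hconv.setOf_add_smul_mem_eq_Iio hopen hbelow habove
  have hmem : ∀ t, p + t • v ∈ Γ ↔ t < sSup S := fun t => Set.ext_iff.mp hS t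
  rw [hopen.frontier_eq]
  constructor
  · rintro ⟨hcl, hnot⟩
    refine le_antisymm (not_lt.mp fun hlt => ?_) (not_lt.mp (hnot ∘ (hmem t).mpr))
    obtain ⟨s, hsS, hs⟩ := not_bddBelow_iff.mp hbelow (sSup S)
    exact lt_irrefl _ <| (hmem _).mp <|
      hconv.add_smul_mem_of_mem_of_mem_closure hopen hsS hcl hs.le hlt
  · rintro rfl
    refine ⟨?_, fun h => lt_irrefl _ ((hmem _).mp h)⟩
    have hsup : sSup S ∈ closure (Set.Iio (sSup S)) := by rw [closure_Iio]; exact Set.self_mem_Iic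
    exact map_mem_closure (f := fun t : ℝ => p + t • v) (by fun_prop) hsup
      fun t ht => (hmem t).mpr ht

end Line

theorem neg_first_ones_eq_add_smul (n : ℕ) (μ : ℝ) :
    (fun i : Fin n => if (i : ℕ) = 0 then -μ else 1) =
      (fun i : Fin n => if (i : ℕ) = 0 then 0 else 1) +
        μ • fun i : Fin n => if (i : ℕ) = 0 then -1 else 0 := by
  funext i
  split_ifs with h <;> simp [h]

theorem sum_neg_first_ones {n : ℕ} (hn : n ≠ 0) (μ : ℝ) :
    ∑ i : Fin n, (if (i : ℕ) = 0 then -μ else 1) = n - 1 - μ := by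
  obtain ⟨k, rfl⟩ := Nat.exists_eq_succ_of_ne_zero hn
  simp only [Fin.sum_univ_succ, Fin.val_zero, Fin.val_succ, ↓reduceIte, Nat.succ_ne_zero,
    Finset.sum_const, Finset.card_univ, Fintype.card_fin, nsmul_eq_mul, mul_one, Nat.cast_succ]
  ring

theorem stmt0_general (n : ℕ) (hn : 3 ≤ n) (Γ : Set (Fin n → ℝ))
    (hopen : IsOpen Γ) (hconv : Convex ℝ Γ)
    (hsub1 : {x : Fin n → ℝ | ∀ i, 0 < x i} ⊆ Γ)
    (hsub2 : Γ ⊆ {x : Fin n → ℝ | 0 < ∑ i, x i}) :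
    (∃! μ : ℝ, (fun i : Fin n => if (i : ℕ) = 0 then -μ else 1) ∈ frontier Γ) ∧
    (∀ μ : ℝ, (fun i : Fin n => if (i : ℕ) = 0 then -μ else 1) ∈ frontier Γ →
      0 ≤ μ ∧ μ ≤ (n : ℝ) - 1) := by
  obtain ⟨p, v, hline⟩ : ∃ p v : Fin n → ℝ,
      ∀ μ : ℝ, (fun i : Fin n => if (i : ℕ) = 0 then -μ else 1) = p + μ • v :=
    ⟨_, _, neg_first_ones_eq_add_smul n⟩
  set S := {t : ℝ | p + t • v ∈ Γ}
  have hneg : Set.Iio 0 ⊆ S := fun t ht => by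
    rw [Set.mem_ofPred_eq, ← hline]
    exact hsub1 fun i => by split_ifs <;> linarith [ht.out]
  have hle : ∀ t ∈ S, t ≤ n - 1 := fun t ht => by
    have hsum := hsub2 ht
    rw [← hline, Set.mem_ofPred_eq, sum_neg_first_ones (by omega)] at hsum
    linarith
  have habove : BddAbove S := ⟨n - 1, hle⟩
  have hbelow : ¬BddBelow S := fun hbdd => not_bddBelow_Iio 0 (hbdd.mono hneg)
  simp only [hline, hconv.add_smul_mem_frontier_iff hopen hbelow habove]
  refine ⟨existsUnique_eq, ?_⟩
  rintro _ rfl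
  have hS : S = Set.Iio (sSup S) := hconv.setOf_add_smul_mem_eq_Iio hopen hbelow habove
  exact ⟨Set.Iio_subset_Iio_iff.mp (hS ▸ hneg), csSup_le ⟨-1, hneg (by norm_num)⟩ hle⟩

/-- For a symmetric open convex cone Γ ⊂ ℝⁿ with vertex at 0 satisfying
Γₙ⁺ ⊆ Γ ⊆ Γ₁⁺, the number μ_Γ⁺ with (-μ_Γ⁺,1,…,1) ∈ ∂Γ exists, is unique, and
satisfies 0 ≤ μ_Γ⁺ ≤ n−1. -/
theorem stmt0 (n : ℕ) (hn : 3 ≤ n) (Γ : Set (Fin n → ℝ))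
    (hopen : IsOpen Γ) (hconv : Convex ℝ Γ) (hconn : IsConnected Γ)
    (hsymm : ∀ (σ : Equiv.Perm (Fin n)), ∀ x ∈ Γ, (x ∘ σ) ∈ Γ)
    (hcone : ∀ t : ℝ, 0 < t → ∀ x ∈ Γ, t • x ∈ Γ)
    (hsub1 : {x : Fin n → ℝ | ∀ i, 0 < x i} ⊆ Γ)
    (hsub2 : Γ ⊆ {x : Fin n → ℝ | 0 < ∑ i, x i}) :
    (∃! μ : ℝ, (fun i : Fin n => if (i : ℕ) = 0 then -μ else 1) ∈ frontier Γ) ∧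
    (∀ μ : ℝ, (fun i : Fin n => if (i : ℕ) = 0 then -μ else 1) ∈ frontier Γ →
      0 ≤ μ ∧ μ ≤ (n : ℝ) - 1) :=
  stmt0_general n hn Γ hopen hconv hsub1 hsub2
end

section
/- For the Gårding cone Γₖ⁺ = {λ ∈ ℝⁿ : σⱼ(λ) > 0 for all 1 ≤ j ≤ k}, one has μ_{Γₖ⁺}⁺ = (n−k)/k, i.e., the vector (−(n−k)/k, 1, …, 1) lies on the boundary of Γₖ⁺. -/
/-!
Along the line `λ(t) = (t, 1, …, 1)` the elementary symmetric polynomials are affine in `t`: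
`σⱼ(λ(t)) = C(n-1, j-1) t + C(n-1, j) = C(n-1, j-1) (t + (n-j)/j)`.
Since `(n-j)/j` decreases in `j`, `λ(t) ∈ Γₖ⁺` for every `t > -(n-k)/k`, while
`σₖ(λ(-(n-k)/k)) = 0`; so `λ(-(n-k)/k)` is a limit of points of `Γₖ⁺` that is not in `Γₖ⁺`.
-/

open Finset

/-- The j-th elementary symmetric polynomial in n variables. -/
def esymm (n j : ℕ) (x : Fin n → ℝ) : ℝ :=
  ∑ s ∈ Finset.univ.powersetCard j, ∏ i ∈ s, x i

/-- The Gårding cone Γₖ⁺ ⊂ ℝⁿ. -/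
def gardingCone (n k : ℕ) : Set (Fin n → ℝ) :=
  {x | ∀ j : ℕ, 1 ≤ j → j ≤ k → 0 < esymm n j x}

namespace Multiset

variable {R : Type*} [CommSemiring R]

theorem esymm_cons_succ (a : R) (s : Multiset R) (j : ℕ) :
    (a ::ₘ s).esymm (j + 1) = s.esymm (j + 1) + a * s.esymm j := by
  simp [esymm, map_map, prod_cons, sum_map_mul_left]

theorem esymm_replicate_one (m j : ℕ) : (replicate m (1 : R)).esymm j = m.choose j := by
  induction m generalizing j with
  | zero => cases j <;> simp [esymm, powersetCard_zero_right]
  | succ m ih =>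
    cases j with
    | zero => simp [esymm]
    | succ j => rw [replicate_succ, esymm_cons_succ, ih, ih, Nat.choose_succ_succ']; push_cast; ring

end Multiset

theorem esymm_eq_multiset_esymm (n j : ℕ) (x : Fin n → ℝ) :
    esymm n j x = (univ.val.map x).esymm j :=
  (Finset.esymm_map_val x univ j).symm

def firstCoordOnes (n : ℕ) (t : ℝ) : Fin n → ℝ := fun i => if (i : ℕ) = 0 then t else 1

theorem map_firstCoordOnes_univ (m : ℕ) (t : ℝ) :
    univ.val.map (firstCoordOnes (m + 1) t) = t ::ₘ Multiset.replicate m 1 := by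
  simp only [Fin.univ_val_map, firstCoordOnes, List.ofFn_succ, Fin.val_zero, Fin.val_succ,
    Nat.succ_ne_zero, if_true, if_false, List.ofFn_const]
  rfl

theorem esymm_firstCoordOnes_succ (m j : ℕ) (t : ℝ) :
    esymm (m + 1) (j + 1) (firstCoordOnes (m + 1) t) = m.choose (j + 1) + t * m.choose j := by
  rw [esymm_eq_multiset_esymm, map_firstCoordOnes_univ, Multiset.esymm_cons_succ,
    Multiset.esymm_replicate_one, Multiset.esymm_replicate_one]

theorem esymm_firstCoordOnes {n j : ℕ} (hj : 1 ≤ j) (hjn : j ≤ n) (t : ℝ) :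
    esymm n j (firstCoordOnes n t) = (n - 1).choose (j - 1) * (t + ((n : ℝ) - j) / j) := by
  obtain ⟨m, rfl⟩ : ∃ m, n = m + 1 := ⟨n - 1, by omega⟩
  obtain ⟨i, rfl⟩ : ∃ i, j = i + 1 := ⟨j - 1, by omega⟩
  have hchoose : (m.choose (i + 1) : ℝ) * (i + 1) = m.choose i * (m - i) := by
    rw [← Nat.cast_sub (by omega)]
    exact_mod_cast Nat.choose_succ_right_eq m i
  rw [esymm_firstCoordOnes_succ]
  push_cast
  field_simp
  linear_combination hchoose

theorem firstCoordOnes_mem_gardingCone {n k : ℕ} (hkn : k ≤ n) {t : ℝ}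
    (ht : -(((n : ℝ) - k) / k) < t) : firstCoordOnes n t ∈ gardingCone n k := by
  intro j hj hjk
  have hj' : (0 : ℝ) < j := by exact_mod_cast hj
  have hk' : (0 : ℝ) < k := by exact_mod_cast hj.trans hjk
  have hjk' : (j : ℝ) ≤ k := by exact_mod_cast hjk
  have hratio : ((n : ℝ) - k) / k ≤ ((n : ℝ) - j) / j := by
    rw [sub_div, sub_div, div_self hk'.ne', div_self hj'.ne']
    gcongr
  rw [esymm_firstCoordOnes hj (hjk.trans hkn)]
  have : 0 < ((n - 1).choose (j - 1) : ℝ) := by exact_mod_cast Nat.choose_pos (by omega)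
  have : 0 < t + ((n : ℝ) - j) / j := by linarith
  positivity

theorem esymm_firstCoordOnes_threshold {n k : ℕ} (hk : 1 ≤ k) (hkn : k ≤ n) :
    esymm n k (firstCoordOnes n (-(((n : ℝ) - k) / k))) = 0 := by
  rw [esymm_firstCoordOnes hk hkn, neg_add_cancel, mul_zero]

theorem continuous_firstCoordOnes (n : ℕ) : Continuous (firstCoordOnes n) :=
  continuous_pi fun _ => continuous_id.if_const _ continuous_const

theorem stmt1_general (n k : ℕ) (hk1 : 1 ≤ k) (hkn : k ≤ n) :
    (fun i : Fin n => if (i : ℕ) = 0 then -(((n : ℝ) - k) / k) else 1) ∈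
      frontier (gardingCone n k) := by
  set t₀ : ℝ := -(((n : ℝ) - k) / k)
  change firstCoordOnes n t₀ ∈ frontier (gardingCone n k)
  have hclosure : firstCoordOnes n t₀ ∈ closure (gardingCone n k) := by
    have hlim : firstCoordOnes n t₀ ∈ closure (firstCoordOnes n '' Set.Ioi t₀) :=
      mem_closure_image (continuous_firstCoordOnes n).continuousAt (by simp [closure_Ioi])
    refine closure_mono ?_ hlim
    rintro _ ⟨t, ht, rfl⟩
    exact firstCoordOnes_mem_gardingCone hkn ht
  have hnot_mem : firstCoordOnes n t₀ ∉ gardingCone n k := fun h =>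
    (h k hk1 le_rfl).ne' (esymm_firstCoordOnes_threshold hk1 hkn)
  exact ⟨hclosure, fun h => hnot_mem (interior_subset h)⟩

/-- μ_{Γₖ⁺}⁺ = (n−k)/k, i.e. (−(n−k)/k, 1, …, 1) ∈ ∂Γₖ⁺. -/
theorem stmt1 (n k : ℕ) (hn : 3 ≤ n) (hk1 : 1 ≤ k) (hkn : k ≤ n) :
    (fun i : Fin n => if (i : ℕ) = 0 then -(((n : ℝ) - k) / k) else 1) ∈
      frontier (gardingCone n k) :=
  stmt1_general n k hk1 hkn
end

section
/- The vector (1, 1, …, 1, −1) ∈ ℝⁿ belongs to the Gårding cone Γₖ⁺ if and only if k < n/2. -/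
open Finset

lemma esymm_val (n : ℕ) (m : ℕ) (hn : 1 ≤ n) :
    esymm n (m + 1) (fun i : Fin n => if (i : ℕ) = n - 1 then (-1 : ℝ) else 1)
      = (Nat.choose (n - 1) (m + 1) : ℝ) - (Nat.choose (n - 1) m : ℝ) := by
  set x : Fin n → ℝ := fun i : Fin n => if (i : ℕ) = n - 1 then (-1 : ℝ) else 1 with hx
  set a : Fin n := ⟨n - 1, Nat.sub_lt hn one_pos⟩ with ha
  have hxa : x a = -1 := by simp [hx, ha]
  have hxi : ∀ i : Fin n, i ≠ a → x i = 1 := by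
    intro i hi
    have : (i : ℕ) ≠ n - 1 := fun h => hi (Fin.ext h)
    simp [hx, this]
  have hcard : ((univ : Finset (Fin n)).erase a).card = n - 1 := by
    rw [card_erase_of_mem (mem_univ a), card_univ, Fintype.card_fin]
  have hsplit : (univ : Finset (Fin n)).powersetCard (m + 1)
      = ((univ : Finset (Fin n)).erase a).powersetCard (m + 1)
        ∪ (((univ : Finset (Fin n)).erase a).powersetCard m).image (insert a) := by
    conv_lhs => rw [← insert_erase (mem_univ a)]
    exact powersetCard_succ_insert (notMem_erase a univ) m
  have hdisj : Disjoint (((univ : Finset (Fin n)).erase a).powersetCard (m + 1))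
      ((((univ : Finset (Fin n)).erase a).powersetCard m).image (insert a)) := by
    rw [Finset.disjoint_left]
    intro s hs hs'
    have h1 : a ∉ s := fun h =>
      (notMem_erase a univ) ((mem_powersetCard.1 hs).1 h)
    obtain ⟨t, _, rfl⟩ := mem_image.1 hs'
    exact h1 (mem_insert_self a t)
  have hsum1 : ∑ s ∈ ((univ : Finset (Fin n)).erase a).powersetCard (m + 1),
      ∏ i ∈ s, x i = (Nat.choose (n - 1) (m + 1) : ℝ) := by
    have h1 : ∀ s ∈ ((univ : Finset (Fin n)).erase a).powersetCard (m + 1),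
        ∏ i ∈ s, x i = 1 := by
      intro s hs
      apply Finset.prod_eq_one
      intro i hi
      exact hxi i (fun h => (notMem_erase a univ) ((mem_powersetCard.1 hs).1 (h ▸ hi)))
    rw [Finset.sum_congr rfl h1, Finset.sum_const, nsmul_eq_mul, mul_one,
      card_powersetCard, hcard]
  have hsum2 : ∑ s ∈ (((univ : Finset (Fin n)).erase a).powersetCard m).image (insert a),
      ∏ i ∈ s, x i = -(Nat.choose (n - 1) m : ℝ) := by
    rw [Finset.sum_image]
    · have h2 : ∀ t ∈ ((univ : Finset (Fin n)).erase a).powersetCard m,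
          ∏ i ∈ insert a t, x i = -1 := by
        intro t ht
        have hat : a ∉ t := fun h => (notMem_erase a univ) ((mem_powersetCard.1 ht).1 h)
        rw [Finset.prod_insert hat, hxa]
        have : ∏ i ∈ t, x i = 1 := Finset.prod_eq_one fun i hi =>
          hxi i (fun h => (notMem_erase a univ) ((mem_powersetCard.1 ht).1 (h ▸ hi)))
        rw [this, mul_one]
      rw [Finset.sum_congr rfl h2, Finset.sum_const, card_powersetCard, hcard]
      simp
    · intro t1 ht1 t2 ht2 h
      have h1 : a ∉ t1 := fun h' => (notMem_erase a univ) ((mem_powersetCard.1 ht1).1 h')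
      have h2 : a ∉ t2 := fun h' => (notMem_erase a univ) ((mem_powersetCard.1 ht2).1 h')
      rw [← Finset.erase_insert h1, ← Finset.erase_insert h2, h]
  rw [esymm, hsplit, Finset.sum_union hdisj, hsum1, hsum2]
  ring

/-- (1,…,1,−1) ∈ Γₖ⁺ if and only if k < n/2. -/
theorem stmt2 (n k : ℕ) (hn : 3 ≤ n) (hk1 : 1 ≤ k) (hkn : k ≤ n) :
    ((fun i : Fin n => if (i : ℕ) = n - 1 then (-1 : ℝ) else 1) ∈ gardingCone n k)
      ↔ 2 * k < n := by
  have hn1 : 1 ≤ n := by omega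
  have key : ∀ j : ℕ, 1 ≤ j → j ≤ n →
      (0 < esymm n j (fun i : Fin n => if (i : ℕ) = n - 1 then (-1 : ℝ) else 1)
        ↔ 2 * j < n) := by
    intro j hj1 hjn
    obtain ⟨m, rfl⟩ := Nat.exists_eq_add_of_le hj1
    rw [show 1 + m = m + 1 by omega, esymm_val n m hn1]
    rw [sub_pos, Nat.cast_lt]
    have hch := Nat.choose_succ_right_eq (n - 1) m
    constructor
    · intro h
      by_contra hle
      push_neg at hle
      -- n ≤ 2 * (m + 1), i.e. n - (1+m) ≤ 1 + m
      have hle' : n - 1 - m ≤ m + 1 := by omega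
      have : Nat.choose (n - 1) (m + 1) * (m + 1) ≤ Nat.choose (n - 1) m * (m + 1) := by
        rw [hch]
        exact Nat.mul_le_mul (Nat.choose_le_choose _ (by omega)) hle' |>.trans
          (le_of_eq rfl)
      have := Nat.le_of_mul_le_mul_right this (by omega)
      omega
    · intro h
      have hpos : 0 < Nat.choose (n - 1) m := Nat.choose_pos (by omega)
      have hlt : m + 1 < n - 1 - m := by omega
      have : Nat.choose (n - 1) m * (m + 1) < Nat.choose (n - 1) (m + 1) * (m + 1) := by
        rw [hch]
        exact mul_lt_mul_of_pos_left hlt hpos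
      exact Nat.lt_of_mul_lt_mul_right this
  constructor
  · intro h
    exact (key k hk1 hkn).1 (h k hk1 (le_refl k))
  · intro h j hj1 hjk
    exact (key j hj1 (le_trans hjk hkn)).2 (by omega)
end

section
/- Let f : Γ → ℝ be smooth and concave on an open convex symmetric cone Γ. If λ ∈ Γ and λᵢ ≤ λⱼ, then ∂f/∂λᵢ(λ) ≥ ∂f/∂λⱼ(λ). In particular, if λ₁ ≥ λ₂ ≥ … ≥ λₙ, then ∂f/∂λₙ(λ) ≥ (1/n) Σⱼ ∂f/∂λⱼ(λ). -/
open Finset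

/-- Gradient inequality for concave functions: `f y - f x ≤ Df(x)(y - x)`. -/
lemma concave_grad_ineq {E : Type*} [NormedAddCommGroup E] [NormedSpace ℝ E]
    {s : Set E} {f : E → ℝ} (hconc : ConcaveOn ℝ s f) {x y : E}
    (hx : x ∈ s) (hy : y ∈ s) (hd : DifferentiableAt ℝ f x) :
    f y - f x ≤ fderiv ℝ f x (y - x) := by
  set g : ℝ → ℝ := fun t => f (x + t • (y - x)) with hg
  have hmap : (fun t : ℝ => x + t • (y - x)) = ⇑(AffineMap.lineMap x y : ℝ →ᵃ[ℝ] E) := by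
    funext t; simp [AffineMap.lineMap_apply]; abel
  have hgc : ConcaveOn ℝ ((fun t : ℝ => x + t • (y - x)) ⁻¹' s) g := by
    have h := hconc.comp_affineMap (AffineMap.lineMap x y)
    have hgeq : g = f ∘ ⇑(AffineMap.lineMap x y) := by
      funext t; simp [g, Function.comp, AffineMap.lineMap_apply, add_comm]
    rw [hmap, hgeq]
    exact h
  have h0 : (0 : ℝ) ∈ (fun t : ℝ => x + t • (y - x)) ⁻¹' s := by simp [hx]
  have h1 : (1 : ℝ) ∈ (fun t : ℝ => x + t • (y - x)) ⁻¹' s := by simp [hy]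
  have hder : HasDerivAt g (fderiv ℝ f x (y - x)) 0 := by
    have hline : HasDerivAt (fun t : ℝ => x + t • (y - x)) (y - x) 0 := by
      simpa using ((hasDerivAt_id (0:ℝ)).smul_const (y - x)).const_add x
    have hfd : HasFDerivAt f (fderiv ℝ f x) (x + (0:ℝ) • (y - x)) := by
      simpa using hd.hasFDerivAt
    have := (hfd).comp_hasDerivAt (f := fun t : ℝ => x + t • (y - x)) (0:ℝ) hline
    exact this
  have := hgc.slope_le_of_hasDerivAt h0 h1 one_pos hder
  simpa [slope, g] using this

/-- At a point fixed by a permutation, the derivative of a symmetric function is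
invariant under that permutation of directions. -/
lemma sym_deriv_eq {n : ℕ} {Γ : Set (Fin n → ℝ)} (hopen : IsOpen Γ)
    {f : (Fin n → ℝ) → ℝ} (σ : Equiv.Perm (Fin n))
    (hsymmf : ∀ y ∈ Γ, f (y ∘ σ) = f y)
    {x : Fin n → ℝ} (hx : x ∈ Γ) (hfix : x ∘ σ = x)
    (hd : DifferentiableAt ℝ f x) (v : Fin n → ℝ) :
    fderiv ℝ f x (v ∘ σ) = fderiv ℝ f x v := by
  set L : (Fin n → ℝ) →L[ℝ] (Fin n → ℝ) :=
    LinearMap.toContinuousLinearMap (LinearMap.funLeft ℝ ℝ σ) with hL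
  have hLapp : ∀ w : Fin n → ℝ, L w = w ∘ σ := fun w => rfl
  have heq : (f ∘ L) =ᶠ[nhds x] f := by
    filter_upwards [hopen.mem_nhds hx] with y hy
    simpa [Function.comp, hLapp] using hsymmf y hy
  have h1 : fderiv ℝ (f ∘ L) x = fderiv ℝ f x := heq.fderiv_eq
  have h2 : fderiv ℝ (f ∘ L) x = (fderiv ℝ f x).comp L := by
    have hdL : DifferentiableAt ℝ f (L x) := by
      rw [hLapp, hfix]; exact hd
    have := (hdL.hasFDerivAt.comp x L.hasFDerivAt).fderiv
    rw [this, hLapp, hfix]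
  have := congrArg (fun T => T v) (h1.symm.trans h2)
  simpa [hLapp] using this.symm

/-- For f smooth, symmetric and concave on an open convex symmetric cone Γ:
if λ ∈ Γ and λᵢ ≤ λⱼ then ∂f/∂λᵢ(λ) ≥ ∂f/∂λⱼ(λ); in particular if λ₁ ≥ … ≥ λₙ then
∂f/∂λₙ(λ) ≥ (1/n)Σⱼ ∂f/∂λⱼ(λ). -/
theorem stmt6 (n : ℕ) (hn : 3 ≤ n) (Γ : Set (Fin n → ℝ))
    (hopen : IsOpen Γ) (hconv : Convex ℝ Γ)
    (hsymm : ∀ (σ : Equiv.Perm (Fin n)), ∀ x ∈ Γ, (x ∘ σ) ∈ Γ)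
    (hcone : ∀ t : ℝ, 0 < t → ∀ x ∈ Γ, t • x ∈ Γ)
    (f : (Fin n → ℝ) → ℝ)
    (hdiff : ContDiffOn ℝ (⊤ : ℕ∞) f Γ)
    (hconc : ConcaveOn ℝ Γ f)
    (hsymmf : ∀ (σ : Equiv.Perm (Fin n)), ∀ x ∈ Γ, f (x ∘ σ) = f x) :
    ∀ x ∈ Γ,
      (∀ i j : Fin n, x i ≤ x j →
        fderiv ℝ f x (Pi.single j 1) ≤ fderiv ℝ f x (Pi.single i 1)) ∧
      ((∀ i j : Fin n, i ≤ j → x j ≤ x i) →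
        ∀ i : Fin n, (i : ℕ) = n - 1 →
          (1 / (n : ℝ)) * ∑ j, fderiv ℝ f x (Pi.single j 1) ≤
            fderiv ℝ f x (Pi.single i 1)) := by
  intro x hx
  have hd : DifferentiableAt ℝ f x :=
    ((hdiff x hx).contDiffAt (hopen.mem_nhds hx)).differentiableAt (by simp)
  have part1 : ∀ i j : Fin n, x i ≤ x j →
      fderiv ℝ f x (Pi.single j 1) ≤ fderiv ℝ f x (Pi.single i 1) := by
    intro i j hij
    rcases eq_or_ne i j with rfl | hne
    · exact le_refl _
    set σ := Equiv.swap i j with hσ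
    have hsingle : (Pi.single j 1 : Fin n → ℝ) ∘ σ = Pi.single i 1 := by
      funext k
      simp only [Function.comp_apply, hσ]
      rcases eq_or_ne k i with rfl | hki
      · rw [Equiv.swap_apply_left, Pi.single_eq_same, Pi.single_eq_same]
      rcases eq_or_ne k j with rfl | hkj
      · rw [Equiv.swap_apply_right, Pi.single_eq_of_ne hne, Pi.single_eq_of_ne hne.symm]
      · rw [Equiv.swap_apply_of_ne_of_ne hki hkj, Pi.single_eq_of_ne hkj, Pi.single_eq_of_ne hki]
    rcases lt_or_eq_of_le hij with hlt | heqv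
    · -- strict case: use concavity
      set y := x ∘ σ with hy
      have hyΓ : y ∈ Γ := hsymm σ x hx
      have hfy : f y = f x := hsymmf σ x hx
      have key := concave_grad_ineq hconc hx hyΓ hd
      rw [hfy, sub_self] at key
      have hyx : y - x = (x j - x i) • (Pi.single i 1 - Pi.single j 1) := by
        funext k
        simp only [Pi.sub_apply, Pi.smul_apply, smul_eq_mul, hy, Function.comp_apply, hσ]
        rcases eq_or_ne k i with rfl | hki
        · rw [Equiv.swap_apply_left, Pi.single_eq_same, Pi.single_eq_of_ne hne]
          ring
        rcases eq_or_ne k j with rfl | hkj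
        · rw [Equiv.swap_apply_right, Pi.single_eq_same, Pi.single_eq_of_ne hne.symm]
          ring
        · rw [Equiv.swap_apply_of_ne_of_ne hki hkj, Pi.single_eq_of_ne hki, Pi.single_eq_of_ne hkj]
          ring
      rw [hyx] at key
      simp only [map_smul, map_sub, smul_eq_mul] at key
      nlinarith [key]
    · -- equal case: use symmetry
      have hfix : x ∘ σ = x := by
        funext k
        rcases eq_or_ne k i with rfl | hki
        · simp [σ, Equiv.swap_apply_left, heqv]
        rcases eq_or_ne k j with rfl | hkj
        · simp [σ, Equiv.swap_apply_right, heqv]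
        · simp [σ, Equiv.swap_apply_of_ne_of_ne hki hkj]
      have := sym_deriv_eq hopen σ (fun y hy => hsymmf σ y hy) hx hfix hd (Pi.single j 1)
      rw [hsingle] at this
      rw [this]
  refine ⟨part1, ?_⟩
  intro hdec i hi
  have hxi : ∀ j : Fin n, x i ≤ x j := by
    intro j
    apply hdec j i
    have : (j : ℕ) ≤ n - 1 := Nat.le_sub_one_of_lt j.2
    exact Fin.le_def.mpr (by omega)
  have hsum : ∑ j, fderiv ℝ f x (Pi.single j 1) ≤ n * fderiv ℝ f x (Pi.single i 1) := by
    calc ∑ j, fderiv ℝ f x (Pi.single j 1)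
        ≤ ∑ _j : Fin n, fderiv ℝ f x (Pi.single i 1) :=
          Finset.sum_le_sum fun j _ => part1 i j (hxi j)
      _ = n * fderiv ℝ f x (Pi.single i 1) := by
          rw [Finset.sum_const, Finset.card_univ, Fintype.card_fin, nsmul_eq_mul]
  have hnpos : (0 : ℝ) < n := by positivity
  rw [div_mul_eq_mul_div, one_mul, div_le_iff₀ hnpos]
  linarith [hsum]
end

section
/- Let Γ satisfy the standard cone conditions with Γ ≠ Γₙ⁺, and let f be a symmetric, concave, 1-homogeneous, monotone defining function for Γ. Then there is a constant θ = θ(n, Γ) > 0 such that for any λ ∈ Γ with λ₁ ≥ ⋯ ≥ λₙ, one has ∂f/∂λᵢ(λ) ≥ θ Σⱼ ∂f/∂λⱼ(λ) whenever i ∈ {n−1, n} or λᵢ ≤ 0. -/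
open Finset

section Aux

variable {n : ℕ} {Γ : Set (Fin n → ℝ)} {f : (Fin n → ℝ) → ℝ}

private lemma aux_hasFDerivAt (hopen : IsOpen Γ) (hdiff : ContDiffOn ℝ (⊤ : ℕ∞) f Γ)
    {x : Fin n → ℝ} (hx : x ∈ Γ) : HasFDerivAt f (fderiv ℝ f x) x :=
  (((hdiff.differentiableOn (by simp)) x hx).differentiableAt (hopen.mem_nhds hx)).hasFDerivAt

private lemma aux_add_mem (hopen : IsOpen Γ) (hconv : Convex ℝ Γ)
    (hcone : ∀ t : ℝ, 0 < t → ∀ x ∈ Γ, t • x ∈ Γ)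
    (hsub1 : {x : Fin n → ℝ | ∀ i, 0 < x i} ⊆ Γ)
    {x u : Fin n → ℝ} (hx : x ∈ Γ) (hu : ∀ k, 0 ≤ u k) : x + u ∈ Γ := by
  obtain ⟨ε, hε, hball⟩ := Metric.isOpen_iff.mp hopen x hx
  have hδ : (0:ℝ) < ε/2 := by positivity
  have hx' : (x + fun _ => -(ε/2)) ∈ Γ := by
    apply hball
    rw [Metric.mem_ball, dist_pi_lt_iff hε]
    intro k
    simp only [Pi.add_apply, Real.dist_eq]
    rw [show x k + -(ε/2) - x k = -(ε/2) by ring, abs_neg, abs_of_pos hδ]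
    linarith
  have hu' : (fun k => u k + ε/2) ∈ Γ := hsub1 (fun k => by have := hu k; show (0:ℝ) < u k + ε/2; linarith)
  have hmid := hconv hx' hu' (by norm_num : (0:ℝ) ≤ 1/2) (by norm_num : (0:ℝ) ≤ 1/2)
    (by norm_num : (1:ℝ)/2 + 1/2 = 1)
  have h2 := hcone 2 (by norm_num) _ hmid
  have heq : x + u = (2:ℝ) • ((1/2:ℝ) • (x + fun _ => -(ε/2)) + (1/2:ℝ) • fun k => u k + ε/2) := by
    funext k
    simp only [Pi.add_apply, Pi.smul_apply, smul_eq_mul]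
    ring
  rwa [heq]

private lemma aux_euler (hopen : IsOpen Γ) (hdiff : ContDiffOn ℝ (⊤ : ℕ∞) f Γ)
    (hhom : ∀ t : ℝ, 0 < t → ∀ x ∈ Γ, f (t • x) = t * f x)
    {x : Fin n → ℝ} (hx : x ∈ Γ) : fderiv ℝ f x x = f x := by
  have hF := aux_hasFDerivAt hopen hdiff hx
  have hF1 : HasFDerivAt f (fderiv ℝ f x) ((1:ℝ) • x) := by rwa [one_smul]
  have hc : HasDerivAt (fun t : ℝ => t • x) x 1 := by
    simpa using (hasDerivAt_id (1:ℝ)).smul_const x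
  have h1 : HasDerivAt (fun t : ℝ => f (t • x)) (fderiv ℝ f x x) 1 :=
    hF1.comp_hasDerivAt 1 hc
  have heq : (fun t : ℝ => f (t • x)) =ᶠ[nhds 1] fun t : ℝ => t * f x := by
    filter_upwards [isOpen_Ioi.mem_nhds (by norm_num : (1:ℝ) ∈ Set.Ioi (0:ℝ))] with t ht
    exact hhom t ht x hx
  have hmul : HasDerivAt (fun t : ℝ => t * f x) (f x) 1 := by
    simpa using (hasDerivAt_id (1:ℝ)).mul_const (f x)
  exact h1.unique (hmul.congr_of_eventuallyEq heq)

private lemma aux_repr (hopen : IsOpen Γ) (hdiff : ContDiffOn ℝ (⊤ : ℕ∞) f Γ)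
    {x : Fin n → ℝ} (hx : x ∈ Γ) (y : Fin n → ℝ) :
    fderiv ℝ f x y = ∑ k, y k * fderiv ℝ f x (Pi.single k 1) := by
  have hy : y = ∑ k : Fin n, y k • (Pi.single k (1:ℝ) : Fin n → ℝ) := by
    funext m
    rw [Finset.sum_apply]
    simp only [Pi.smul_apply, Pi.single_apply, smul_eq_mul, mul_ite, mul_one, mul_zero]
    rw [Finset.sum_ite_eq]
    simp
  conv_lhs => rw [hy]
  rw [map_sum]
  refine Finset.sum_congr rfl fun k _ => ?_
  rw [ContinuousLinearMap.map_smul, smul_eq_mul]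

private lemma aux_support (hopen : IsOpen Γ) (hdiff : ContDiffOn ℝ (⊤ : ℕ∞) f Γ)
    (hconc : ConcaveOn ℝ Γ f)
    {x y : Fin n → ℝ} (hx : x ∈ Γ) (hy : y ∈ Γ) :
    f y ≤ f x + fderiv ℝ f x (y - x) := by
  have hF := aux_hasFDerivAt hopen hdiff hx
  have hF0 : HasFDerivAt f (fderiv ℝ f x) (x + (0:ℝ) • (y - x)) := by simpa using hF
  have hc : HasDerivAt (fun t : ℝ => x + t • (y - x)) (y - x) 0 := by
    simpa using ((hasDerivAt_id (0:ℝ)).smul_const (y - x)).const_add x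
  have h1 : HasDerivAt (fun t : ℝ => f (x + t • (y - x))) (fderiv ℝ f x (y - x)) 0 :=
    hF0.comp_hasDerivAt 0 hc
  have hslope : Filter.Tendsto (slope (fun t : ℝ => f (x + t • (y - x))) 0)
      (nhdsWithin 0 (Set.Ioi 0)) (nhds (fderiv ℝ f x (y - x))) := by
    refine (hasDerivAt_iff_tendsto_slope.mp h1).mono_left (nhdsWithin_mono _ ?_)
    intro t ht
    exact Set.mem_compl_singleton_iff.mpr (ne_of_gt ht)
  have hev : ∀ᶠ t in nhdsWithin (0:ℝ) (Set.Ioi 0),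
      f y - f x ≤ slope (fun t : ℝ => f (x + t • (y - x))) 0 t := by
    filter_upwards [Ioc_mem_nhdsGT_of_mem
      (show (0:ℝ) ∈ Set.Ico (0:ℝ) (1:ℝ) by constructor <;> norm_num)] with t ht
    obtain ⟨ht0, ht1⟩ := ht
    have hcomb : (1 - t) * f x + t * f y ≤ f ((1-t) • x + t • y) :=
      hconc.2 hx hy (by linarith) (le_of_lt ht0) (by ring)
    have hxy : x + t • (y - x) = (1-t) • x + t • y := by
      funext k
      simp only [Pi.add_apply, Pi.smul_apply, Pi.sub_apply, smul_eq_mul]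
      ring
    have hslope_eq : slope (fun t : ℝ => f (x + t • (y - x))) 0 t
        = (f ((1-t) • x + t • y) - f x) / t := by
      simp only [slope_def_field]
      rw [hxy, show x + (0:ℝ) • (y - x) = x by simp, sub_zero]
    rw [hslope_eq, le_div_iff₀ ht0]
    nlinarith [hcomb]
  have hfin := ge_of_tendsto hslope hev
  linarith

private lemma aux_dual (hopen : IsOpen Γ) (hdiff : ContDiffOn ℝ (⊤ : ℕ∞) f Γ)
    (hconc : ConcaveOn ℝ Γ f)
    (hhom : ∀ t : ℝ, 0 < t → ∀ x ∈ Γ, f (t • x) = t * f x)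
    {x y : Fin n → ℝ} (hx : x ∈ Γ) (hy : y ∈ Γ) :
    f y ≤ ∑ k, y k * fderiv ℝ f x (Pi.single k 1) := by
  have h1 := aux_support hopen hdiff hconc hx hy
  have h2 : fderiv ℝ f x (y - x) = fderiv ℝ f x y - fderiv ℝ f x x := map_sub _ _ _
  have h3 := aux_euler hopen hdiff hhom hx
  have h4 := aux_repr hopen hdiff hx y
  rw [h2, h3] at h1
  linarith [h1, h4.symm.le, h4.le]

private lemma grad_perm (hopen : IsOpen Γ) (hdiff : ContDiffOn ℝ (⊤ : ℕ∞) f Γ)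
    (hsymm : ∀ (σ : Equiv.Perm (Fin n)), ∀ x ∈ Γ, (x ∘ σ) ∈ Γ)
    (hsymmf : ∀ (σ : Equiv.Perm (Fin n)), ∀ x ∈ Γ, f (x ∘ σ) = f x)
    {x : Fin n → ℝ} (hx : x ∈ Γ) (σ : Equiv.Perm (Fin n)) (i : Fin n) :
    fderiv ℝ f x (Pi.single i 1) = fderiv ℝ f (x ∘ σ) (Pi.single (σ.symm i) 1) := by
  set P : (Fin n → ℝ) →L[ℝ] (Fin n → ℝ) :=
    ContinuousLinearMap.pi (fun k => ContinuousLinearMap.proj (σ k)) with hPdef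
  have hPapp : ∀ y : Fin n → ℝ, P y = y ∘ σ := fun y => rfl
  have hxσ : (x ∘ σ) ∈ Γ := hsymm σ x hx
  have hF : HasFDerivAt f (fderiv ℝ f (x ∘ σ)) (P x) := by
    rw [hPapp]; exact aux_hasFDerivAt hopen hdiff hxσ
  have hcomp : HasFDerivAt (fun y => f (P y)) ((fderiv ℝ f (x ∘ σ)).comp P) x :=
    hF.comp x P.hasFDerivAt
  have heq : (fun y => f (P y)) =ᶠ[nhds x] f := by
    filter_upwards [hopen.mem_nhds hx] with y hy
    rw [hPapp]; exact hsymmf σ y hy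
  have h1 : fderiv ℝ f x = (fderiv ℝ f (x ∘ σ)).comp P := by
    rw [← heq.fderiv_eq]; exact hcomp.fderiv
  have h2 : P (Pi.single i 1) = Pi.single (σ.symm i) (1:ℝ) := by
    funext k
    rw [hPapp]
    simp only [Function.comp_apply, Pi.single_apply]
    by_cases h : k = σ.symm i
    · subst h; simp [Equiv.apply_symm_apply]
    · rw [if_neg h, if_neg]
      intro hc
      exact h (by rw [← hc, Equiv.symm_apply_apply])
  rw [h1, ContinuousLinearMap.comp_apply, h2]

private lemma grad_mono (hopen : IsOpen Γ) (hconv : Convex ℝ Γ)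
    (hdiff : ContDiffOn ℝ (⊤ : ℕ∞) f Γ) (hconc : ConcaveOn ℝ Γ f)
    (hhom : ∀ t : ℝ, 0 < t → ∀ x ∈ Γ, f (t • x) = t * f x)
    (hsymm : ∀ (σ : Equiv.Perm (Fin n)), ∀ x ∈ Γ, (x ∘ σ) ∈ Γ)
    (hsymmf : ∀ (σ : Equiv.Perm (Fin n)), ∀ x ∈ Γ, f (x ∘ σ) = f x)
    {x : Fin n → ℝ} (hx : x ∈ Γ) (hsort : ∀ i j : Fin n, i ≤ j → x j ≤ x i)
    {i j : Fin n} (hij : i ≤ j) :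
    fderiv ℝ f x (Pi.single i 1) ≤ fderiv ℝ f x (Pi.single j 1) := by
  rcases eq_or_lt_of_le hij with rfl | hlt
  · exact le_refl _
  have hne : i ≠ j := ne_of_lt hlt
  rcases eq_or_lt_of_le (hsort i j hij) with heq | hxlt
  · -- equal coordinates: swap symmetry
    have hxσ : (x ∘ (Equiv.swap i j)) = x := by
      funext k
      simp only [Function.comp_apply]
      rcases eq_or_ne k i with rfl | hki
      · rw [Equiv.swap_apply_left]; exact heq
      rcases eq_or_ne k j with rfl | hkj
      · rw [Equiv.swap_apply_right]; exact heq.symm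
      · rw [Equiv.swap_apply_of_ne_of_ne hki hkj]
    have hgp := grad_perm hopen hdiff hsymm hsymmf hx (Equiv.swap i j) i
    rw [hxσ, Equiv.symm_swap, Equiv.swap_apply_left] at hgp
    exact le_of_eq hgp
  · -- strictly decreasing pair: swap inequality
    have hyΓ : (x ∘ (Equiv.swap i j)) ∈ Γ := hsymm _ x hx
    have hd := aux_dual hopen hdiff hconc hhom hx hyΓ
    have hfe : f (x ∘ (Equiv.swap i j)) = f x := hsymmf _ x hx
    have heu : f x = ∑ k, x k * fderiv ℝ f x (Pi.single k 1) := by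
      rw [← aux_repr hopen hdiff hx x]
      exact (aux_euler hopen hdiff hhom hx).symm
    rw [hfe, heu] at hd
    have hkey : 0 ≤ ∑ k, ((x ∘ (Equiv.swap i j)) k - x k) * fderiv ℝ f x (Pi.single k 1) := by
      have hsplit : ∑ k, ((x ∘ (Equiv.swap i j)) k - x k) * fderiv ℝ f x (Pi.single k 1)
          = (∑ k, (x ∘ (Equiv.swap i j)) k * fderiv ℝ f x (Pi.single k 1))
            - ∑ k, x k * fderiv ℝ f x (Pi.single k 1) := by
        rw [← Finset.sum_sub_distrib]
        exact Finset.sum_congr rfl fun k _ => by ring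
      rw [hsplit]
      linarith [hd]
    have e : ∑ k ∈ ({i, j} : Finset (Fin n)),
        ((x ∘ (Equiv.swap i j)) k - x k) * fderiv ℝ f x (Pi.single k 1)
        = ∑ k, ((x ∘ (Equiv.swap i j)) k - x k) * fderiv ℝ f x (Pi.single k 1) := by
      refine Finset.sum_subset (Finset.subset_univ _) (fun k _ hk => ?_)
      simp only [Finset.mem_insert, Finset.mem_singleton, not_or] at hk
      simp only [Function.comp_apply, Equiv.swap_apply_of_ne_of_ne hk.1 hk.2]
      ring
    rw [← e, Finset.sum_pair hne] at hkey
    simp only [Function.comp_apply, Equiv.swap_apply_left, Equiv.swap_apply_right] at hkey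
    nlinarith [hkey]

private lemma core_calc {n : ℕ} (hn : 0 < n) {F : Fin n → ℝ} {i : Fin n} {i₀ : ℕ} {s : ℝ}
    (hs : 0 < s) (hF : ∀ k, 0 < F k) (hFi : ∀ k : Fin n, (k:ℕ) < i₀ → F k ≤ F i)
    (hin : 0 < ∑ k : Fin n, (if (k:ℕ) < i₀ then (1:ℝ) else -s) * F k) :
    s / ((n:ℝ) * (s+1)) * ∑ k, F k ≤ F i := by
  have hnR : (0:ℝ) < (n:ℝ) := by exact_mod_cast hn
  have hsplit : ∑ k : Fin n, (if (k:ℕ) < i₀ then (1:ℝ) else -s) * F k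
      = (∑ k ∈ univ.filter (fun k : Fin n => (k:ℕ) < i₀), F k)
        - s * ∑ k ∈ univ.filter (fun k : Fin n => ¬(k:ℕ) < i₀), F k := by
    rw [← Finset.sum_filter_add_sum_filter_not univ (fun k : Fin n => (k:ℕ) < i₀)
      (fun k => (if (k:ℕ) < i₀ then (1:ℝ) else -s) * F k)]
    rw [Finset.mul_sum, sub_eq_add_neg, ← Finset.sum_neg_distrib]
    congr 1
    · exact Finset.sum_congr rfl fun k hk => by
        rw [Finset.mem_filter] at hk; rw [if_pos hk.2, one_mul]
    · exact Finset.sum_congr rfl fun k hk => by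
        rw [Finset.mem_filter] at hk; rw [if_neg hk.2]; ring
  rw [hsplit] at hin
  have hT1 : ∑ k ∈ univ.filter (fun k : Fin n => (k:ℕ) < i₀), F k ≤ (n:ℝ) * F i := by
    have hb := Finset.sum_le_card_nsmul (univ.filter (fun k : Fin n => (k:ℕ) < i₀)) F (F i)
      (fun k hk => hFi k (Finset.mem_filter.mp hk).2)
    rw [nsmul_eq_mul] at hb
    refine hb.trans (mul_le_mul_of_nonneg_right ?_ (hF i).le)
    have hcard : (univ.filter (fun k : Fin n => (k:ℕ) < i₀)).card ≤ n := by
      calc (univ.filter (fun k : Fin n => (k:ℕ) < i₀)).card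
          ≤ (univ : Finset (Fin n)).card := Finset.card_filter_le _ _
        _ = n := by simp
    exact_mod_cast hcard
  have hT2 : 0 ≤ ∑ k ∈ univ.filter (fun k : Fin n => ¬(k:ℕ) < i₀), F k :=
    Finset.sum_nonneg fun k _ => (hF k).le
  have htot : ∑ k, F k = (∑ k ∈ univ.filter (fun k : Fin n => (k:ℕ) < i₀), F k)
      + ∑ k ∈ univ.filter (fun k : Fin n => ¬(k:ℕ) < i₀), F k :=
    (Finset.sum_filter_add_sum_filter_not univ _ _).symm
  rw [htot, div_mul_eq_mul_div, div_le_iff₀ (mul_pos hnR (by linarith))]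
  have hmul := mul_le_mul_of_nonneg_left hT1 hs.le
  nlinarith [hF i, hin, hT2, hT1, hmul]

end Aux

private def Wpat (n : ℕ) (m : ℕ) (t : ℝ) : Fin n → ℝ := fun k => if (k:ℕ) < m then 1 else -t

/-- For Γ ≠ Γₙ⁺ satisfying the standard cone conditions and f a symmetric,
concave, 1-homogeneous, monotone defining function, there is θ = θ(n,Γ) > 0 such that
for λ ∈ Γ with λ₁ ≥ … ≥ λₙ one has ∂f/∂λᵢ(λ) ≥ θ Σⱼ ∂f/∂λⱼ(λ) whenever i ∈ {n−1, n}
(in 1-based labelling, i.e. the last two indices) or λᵢ ≤ 0. -/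
theorem stmt7 (n : ℕ) (hn : 3 ≤ n) (Γ : Set (Fin n → ℝ))
    (hopen : IsOpen Γ) (hconv : Convex ℝ Γ)
    (hsymm : ∀ (σ : Equiv.Perm (Fin n)), ∀ x ∈ Γ, (x ∘ σ) ∈ Γ)
    (hcone : ∀ t : ℝ, 0 < t → ∀ x ∈ Γ, t • x ∈ Γ)
    (hsub1 : {x : Fin n → ℝ | ∀ i, 0 < x i} ⊆ Γ)
    (hsub2 : Γ ⊆ {x : Fin n → ℝ | 0 < ∑ i, x i})
    (hne : Γ ≠ {x : Fin n → ℝ | ∀ i, 0 < x i})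
    (f : (Fin n → ℝ) → ℝ)
    (hdiff : ContDiffOn ℝ (⊤ : ℕ∞) f Γ)
    (hconc : ConcaveOn ℝ Γ f)
    (hhom : ∀ t : ℝ, 0 < t → ∀ x ∈ Γ, f (t • x) = t * f x)
    (hsymmf : ∀ (σ : Equiv.Perm (Fin n)), ∀ x ∈ Γ, f (x ∘ σ) = f x)
    (hpos : ∀ x ∈ Γ, 0 < f x)
    (hmono : ∀ x ∈ Γ, ∀ i : Fin n, 0 < fderiv ℝ f x (Pi.single i 1)) :
    ∃ θ : ℝ, 0 < θ ∧ ∀ x ∈ Γ, (∀ i j : Fin n, i ≤ j → x j ≤ x i) →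
      ∀ i : Fin n, ((i : ℕ) = n - 1 ∨ (i : ℕ) = n - 2 ∨ x i ≤ 0) →
        θ * ∑ j, fderiv ℝ f x (Pi.single j 1) ≤ fderiv ℝ f x (Pi.single i 1) := by
  classical
  have hn0 : 0 < n := by omega
  have hnR : (0:ℝ) < (n:ℝ) := by exact_mod_cast hn0
  -- Step A : the vector (1,...,1,0) is in Γ
  obtain ⟨p, hpΓ, j, hpj⟩ : ∃ p ∈ Γ, ∃ j : Fin n, p j ≤ 0 := by
    by_contra hcon
    push_neg at hcon
    exact hne (Set.Subset.antisymm (fun q hq k => hcon q hq k) hsub1)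
  have hQ1 : Wpat n (n-1) 0 ∈ Γ := by
    set B : ℝ := ‖p‖ + 1 with hB
    have hBpos : 0 < B := by positivity
    set u : Fin n → ℝ := fun k => if k = j then -(p j) else B - p k with hu
    have hq : (p + u) ∈ Γ := by
      apply aux_add_mem hopen hconv hcone hsub1 hpΓ
      intro k
      simp only [hu]
      split_ifs with hk
      · subst hk; linarith
      · have h1 : p k ≤ |p k| := le_abs_self _
        have h2 : |p k| ≤ ‖p‖ := by simpa using norm_le_pi_norm p k
        simp only [hB]; linarith
    set top : Fin n := ⟨n-1, by omega⟩ with htop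
    have hq' : ((p + u) ∘ (Equiv.swap j top)) ∈ Γ := hsymm _ _ hq
    have hcalc : ((p + u) ∘ (Equiv.swap j top)) = B • Wpat n (n-1) 0 := by
      funext k
      simp only [Function.comp_apply, Pi.add_apply, Pi.smul_apply, smul_eq_mul, Wpat, hu]
      by_cases hk : k = top
      · subst hk
        rw [Equiv.swap_apply_right, if_pos rfl]
        have hnot : ¬ ((top:ℕ) < n - 1) := by simp [htop]
        rw [if_neg hnot]
        ring
      · have hkn : (k:ℕ) < n - 1 := by
          have h1 := k.isLt
          have h2 : (k:ℕ) ≠ n - 1 := fun hc => hk (Fin.ext (by simp [htop, hc]))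
          omega
        have hσk : (Equiv.swap j top) k ≠ j := by
          intro hc
          apply hk
          exact (Equiv.swap j top).injective (hc.trans (Equiv.swap_apply_right j top).symm)
        rw [if_neg hσk, if_pos hkn]
        ring
    rw [hcalc] at hq'
    have := hcone B⁻¹ (inv_pos.mpr hBpos) _ hq'
    rwa [smul_smul, inv_mul_cancel₀ (ne_of_gt hBpos), one_smul] at this
  -- Step B : greatest number of zeros
  set Q : ℕ → Prop := fun m => Wpat n (n - m) 0 ∈ Γ with hQdef
  have hQ1' : Q 1 := hQ1
  set κ : ℕ := Nat.findGreatest Q (n-1) with hκdef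
  have hκ1 : 1 ≤ κ := Nat.le_findGreatest (by omega) hQ1'
  have hκn : κ ≤ n - 1 := Nat.findGreatest_le _
  have hQκ : Q κ := Nat.findGreatest_spec (by omega) hQ1'
  -- Step C : a fixed s > 0 such that the patterns with at most κ entries -s are in Γ
  obtain ⟨ε, hε, hball⟩ := Metric.isOpen_iff.mp hopen _ hQκ
  set s : ℝ := ε/2 with hsdef
  have hs : 0 < s := by positivity
  have hWκ : Wpat n (n - κ) s ∈ Γ := by
    apply hball
    rw [Metric.mem_ball, dist_pi_lt_iff hε]
    intro k
    simp only [Wpat]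
    split_ifs
    · simpa using hε
    · rw [Real.dist_eq, show -s - -(0:ℝ) = -s by ring, abs_neg, abs_of_pos hs]
      simp only [hsdef]; linarith
  have hWmem : ∀ i₀ : ℕ, n - κ ≤ i₀ → Wpat n i₀ s ∈ Γ := by
    intro i₀ hle
    have hEq : Wpat n i₀ s = Wpat n (n-κ) s
        + fun k : Fin n => if (k:ℕ) < n-κ then 0 else if (k:ℕ) < i₀ then 1+s else 0 := by
      funext k
      simp only [Wpat, Pi.add_apply]
      by_cases h1 : (k:ℕ) < n-κ
      · rw [if_pos h1, if_pos h1, if_pos (lt_of_lt_of_le h1 hle)]; ring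
      · rw [if_neg h1, if_neg h1]
        by_cases h2 : (k:ℕ) < i₀
        · rw [if_pos h2, if_pos h2]; ring
        · rw [if_neg h2, if_neg h2]; ring
    rw [hEq]
    apply aux_add_mem hopen hconv hcone hsub1 hWκ
    intro k
    split_ifs with h1 h2
    · exact le_refl 0
    · linarith
    · exact le_refl 0
  -- the constant
  refine ⟨s / ((n:ℝ) * (s+1)), div_pos hs (mul_pos hnR (by linarith)), ?_⟩
  intro x hxΓ hsort i hi
  have hgpos : ∀ k : Fin n, 0 < fderiv ℝ f x (Pi.single k 1) := hmono x hxΓ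
  have hgmono : ∀ {a b : Fin n}, a ≤ b →
      fderiv ℝ f x (Pi.single a 1) ≤ fderiv ℝ f x (Pi.single b 1) :=
    fun hab => grad_mono hopen hconv hdiff hconc hhom hsymm hsymmf hxΓ hsort hab
  have core : ∀ i₀ : ℕ, Wpat n i₀ s ∈ Γ → (∀ k : Fin n, (k:ℕ) < i₀ → k ≤ i) →
      s / ((n:ℝ) * (s+1)) * ∑ j, fderiv ℝ f x (Pi.single j 1)
        ≤ fderiv ℝ f x (Pi.single i 1) := by
    intro i₀ hWi hki
    have hin : 0 < ∑ k : Fin n, (if (k:ℕ) < i₀ then (1:ℝ) else -s) * fderiv ℝ f x (Pi.single k 1) := by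
      refine lt_of_lt_of_le (hpos _ hWi)
        (le_trans (aux_dual hopen hdiff hconc hhom hxΓ hWi) (le_of_eq ?_))
      exact Finset.sum_congr rfl fun k _ => by simp only [Wpat]
    exact core_calc hn0 hs hgpos (fun k hk => hgmono (hki k hk)) hin
  rcases hi with h1 | h1 | h1
  · exact core (n-1) (hWmem _ (by omega)) (fun k hk => by rw [Fin.le_def]; omega)
  · exact core (n-1) (hWmem _ (by omega)) (fun k hk => by rw [Fin.le_def]; omega)
  · -- case x i ≤ 0
    have hx0 : 0 < x ⟨0, hn0⟩ := by
      by_contra hcon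
      push_neg at hcon
      have hall : ∀ k : Fin n, x k ≤ 0 :=
        fun k => le_trans (hsort ⟨0, hn0⟩ k (by rw [Fin.le_def]; simp)) hcon
      have hsum := hsub2 hxΓ
      simp only [Set.mem_setOf_eq] at hsum
      have : ∑ k, x k ≤ 0 := Finset.sum_nonpos fun k _ => hall k
      linarith
    have hipos : 0 < (i:ℕ) := by
      rcases Nat.eq_zero_or_pos (i:ℕ) with h0 | h
      · exfalso
        have : i = ⟨0, hn0⟩ := Fin.ext (by simp [h0])
        rw [this] at h1
        exact absurd h1 (not_le.mpr hx0)
      · exact h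
    -- (1,...,1 (i ones),0,...,0) ∈ Γ
    have hmemW0 : Wpat n (i:ℕ) 0 ∈ Γ := by
      have hadd : (x + fun k : Fin n => if (k:ℕ) < (i:ℕ) then x ⟨0, hn0⟩ - x k else -x k) ∈ Γ := by
        apply aux_add_mem hopen hconv hcone hsub1 hxΓ
        intro k
        split_ifs with hk
        · have : x k ≤ x ⟨0, hn0⟩ := hsort ⟨0, hn0⟩ k (by rw [Fin.le_def]; simp)
          linarith
        · push_neg at hk
          have : x k ≤ x i := hsort i k (by rw [Fin.le_def]; simpa using hk)
          linarith
      have heq2 : (x + fun k : Fin n => if (k:ℕ) < (i:ℕ) then x ⟨0, hn0⟩ - x k else -x k)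
          = x ⟨0, hn0⟩ • Wpat n (i:ℕ) 0 := by
        funext k
        simp only [Pi.add_apply, Pi.smul_apply, smul_eq_mul, Wpat]
        split_ifs <;> ring
      rw [heq2] at hadd
      have := hcone (x ⟨0, hn0⟩)⁻¹ (inv_pos.mpr hx0) _ hadd
      rwa [smul_smul, inv_mul_cancel₀ (ne_of_gt hx0), one_smul] at this
    have hQm : Q (n - (i:ℕ)) := by
      show Wpat n (n - (n - (i:ℕ))) 0 ∈ Γ
      rwa [Nat.sub_sub_self (le_of_lt i.isLt)]
    have hmκ : n - (i:ℕ) ≤ κ := Nat.le_findGreatest (by omega) hQm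
    have hiLt := i.isLt
    exact core (i:ℕ) (hWmem _ (by omega)) (fun k hk => by rw [Fin.le_def]; omega)
end

section
/- Let Γ satisfy the standard cone conditions. Then κ_Γ := max{k : (0,…,0,1,…,1) ∈ Γ with k zeros} equals the maximum number of negative entries that a vector in Γ can have, i.e., κ_Γ = max{k : (−α₁,…,−α_k, α_{k+1},…,α_n) ∈ Γ for some α₁,…,α_n > 0}. -/
open Finset Filter Topology

/-!
If `(0,…,0,1,…,1)` lies in the open set `Γ`, subtracting a small `δ > 0` from every entry keeps it
in `Γ` and makes the first `k` entries negative. Conversely, a convex cone containing the positive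
orthant is closed under adding positive vectors, and a small positive multiple of
`(-α₁,…,-α_k,α_{k+1},…,α_n)` lies strictly below `(0,…,0,1,…,1)` in every entry.
-/

section ConvexCone

variable {ι : Type*} {Γ : Set (ι → ℝ)}

theorem exists_sub_const_mem_of_isOpen (hopen : IsOpen Γ) {x : ι → ℝ} (hx : x ∈ Γ) :
    ∃ δ : ℝ, 0 < δ ∧ δ < 1 ∧ (fun i => x i - δ) ∈ Γ := by
  have hcont : Continuous fun δ : ℝ => fun i => x i - δ := by fun_prop
  have hnear : ∀ᶠ δ in 𝓝[>] (0 : ℝ), (fun i => x i - δ) ∈ Γ :=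
    nhdsWithin_le_nhds <| (hcont.tendsto' 0 x (by simp)).eventually (hopen.mem_nhds hx)
  obtain ⟨δ, ⟨hδ0, hδ1⟩, hδ⟩ := (Filter.Eventually.and (Ioo_mem_nhdsGT one_pos) hnear).exists
  exact ⟨δ, hδ0, hδ1, hδ⟩

theorem mem_of_mem_of_forall_lt (hconv : Convex ℝ Γ)
    (hcone : ∀ t : ℝ, 0 < t → ∀ x ∈ Γ, t • x ∈ Γ)
    (hpos : {x : ι → ℝ | ∀ i, 0 < x i} ⊆ Γ) {x y : ι → ℝ} (hx : x ∈ Γ)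
    (hxy : ∀ i, x i < y i) : y ∈ Γ := by
  have hmid : (1 / 2 : ℝ) • x + (1 / 2 : ℝ) • (y - x) ∈ Γ :=
    hconv hx (hpos fun i => sub_pos.2 (hxy i)) (by norm_num) (by norm_num) (by norm_num)
  have hy : (2 : ℝ) • ((1 / 2 : ℝ) • x + (1 / 2 : ℝ) • (y - x)) = y := by module
  exact hy ▸ hcone 2 two_pos _ hmid

variable [Fintype ι]

theorem zero_one_mem_iff_exists_signed_mem (hopen : IsOpen Γ) (hconv : Convex ℝ Γ)
    (hcone : ∀ t : ℝ, 0 < t → ∀ x ∈ Γ, t • x ∈ Γ)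
    (hpos : {x : ι → ℝ | ∀ i, 0 < x i} ⊆ Γ) (p : ι → Prop) [DecidablePred p] :
    (fun i => if p i then (0 : ℝ) else 1) ∈ Γ ↔
      ∃ α : ι → ℝ, (∀ i, 0 < α i) ∧ (fun i => if p i then -α i else α i) ∈ Γ := by
  constructor
  · intro h
    obtain ⟨δ, hδ0, hδ1, hδ⟩ := exists_sub_const_mem_of_isOpen hopen h
    refine ⟨fun i => if p i then δ else 1 - δ, fun i => ?_, ?_⟩
    · dsimp only
      split_ifs <;> linarith
    · convert hδ using 2 with i
      by_cases hi : p i <;> simp [hi]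
  · rintro ⟨α, hα, hmem⟩
    set t : ℝ := (1 + ∑ i, α i)⁻¹
    have hsum : 0 < 1 + ∑ i, α i := by
      have := Finset.sum_nonneg fun i (_ : i ∈ univ) => (hα i).le
      linarith
    have ht : 0 < t := inv_pos.2 hsum
    have htα : ∀ i, t * α i < 1 := fun i => by
      rw [inv_mul_lt_one₀ hsum]
      linarith [Finset.single_le_sum (fun j _ => (hα j).le) (mem_univ i)]
    refine mem_of_mem_of_forall_lt hconv hcone hpos (hcone t ht _ hmem) fun i => ?_
    simp only [Pi.smul_apply, smul_eq_mul]
    split_ifs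
    · exact mul_neg_of_pos_of_neg ht (neg_neg_of_pos (hα i))
    · exact htα i

end ConvexCone

theorem stmt8_general (n : ℕ) (Γ : Set (Fin n → ℝ))
    (hopen : IsOpen Γ) (hconv : Convex ℝ Γ)
    (hcone : ∀ t : ℝ, 0 < t → ∀ x ∈ Γ, t • x ∈ Γ)
    (hsub1 : {x : Fin n → ℝ | ∀ i, 0 < x i} ⊆ Γ) :
    sSup {k : ℕ | (fun i : Fin n => if (i : ℕ) < k then (0 : ℝ) else 1) ∈ Γ} =
      sSup {k : ℕ | ∃ α : Fin n → ℝ, (∀ i, 0 < α i) ∧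
        (fun i : Fin n => if (i : ℕ) < k then -α i else α i) ∈ Γ} := by
  congr 1
  ext k
  exact zero_one_mem_iff_exists_signed_mem hopen hconv hcone hsub1 fun i => (i : ℕ) < k

/-- κ_Γ = max{k : (0,…,0 (k zeros),1,…,1) ∈ Γ} equals the maximum number of
negative entries a vector in Γ can have. -/
theorem stmt8 (n : ℕ) (hn : 3 ≤ n) (Γ : Set (Fin n → ℝ))
    (hopen : IsOpen Γ) (hconv : Convex ℝ Γ)
    (hsymm : ∀ (σ : Equiv.Perm (Fin n)), ∀ x ∈ Γ, (x ∘ σ) ∈ Γ)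
    (hcone : ∀ t : ℝ, 0 < t → ∀ x ∈ Γ, t • x ∈ Γ)
    (hsub1 : {x : Fin n → ℝ | ∀ i, 0 < x i} ⊆ Γ)
    (hsub2 : Γ ⊆ {x : Fin n → ℝ | 0 < ∑ i, x i}) :
    sSup {k : ℕ | (fun i : Fin n => if (i : ℕ) < k then (0 : ℝ) else 1) ∈ Γ} =
      sSup {k : ℕ | ∃ α : Fin n → ℝ, (∀ i, 0 < α i) ∧
        (fun i : Fin n => if (i : ℕ) < k then -α i else α i) ∈ Γ} :=
  stmt8_general n Γ hopen hconv hcone hsub1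
end
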